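/- For orthonormal vectors {v_1,...,v_d, u_1,...,u_d} in R^D, reals θ_1,...,θ_d with Σ_j θ_j² = 1, and any x ∈ R^D, the Cauchy–Schwarz-type bound holds: (Σ_{j=1}^d θ_j (a_j(t)·x)(b_j(t)·x))² ≤ ‖x‖² · dist(x, L(t))², where a_j(t) = cos(tθ_j) v_j + sin(tθ_j) u_j, b_j(t) = −sin(tθ_j) v_j + cos(tθ_j) u_j, and L(t) = span(a_1(t),...,a_d(t)). -/

import Mathlib

/-- Distance from a point to a subspace (`dist(x,L) = ‖Q_L x‖`). -/
noncomputable def distL {D : ℕ} (x : EuclideanSpace ℝ (Fin D))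
    (L : Submodule ℝ (EuclideanSpace ℝ (Fin D))) : ℝ :=
  ‖x - (L.orthogonalProjection x : EuclideanSpace ℝ (Fin D))‖

/-- `a_j(t) = cos(tθ_j) v_j + sin(tθ_j) u_j`. -/
noncomputable def aVec {D d : ℕ} (v u : Fin d → EuclideanSpace ℝ (Fin D))
    (θ : Fin d → ℝ) (t : ℝ) (j : Fin d) : EuclideanSpace ℝ (Fin D) :=
  Real.cos (t * θ j) • v j + Real.sin (t * θ j) • u j

/-- `b_j(t) = −sin(tθ_j) v_j + cos(tθ_j) u_j`. -/
noncomputable def bVec {D d : ℕ} (v u : Fin d → EuclideanSpace ℝ (Fin D))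
    (θ : Fin d → ℝ) (t : ℝ) (j : Fin d) : EuclideanSpace ℝ (Fin D) :=
  (-Real.sin (t * θ j)) • v j + Real.cos (t * θ j) • u j

/-- `L(t) = span(a₁(t), …, a_d(t))`. -/
noncomputable def rotCurve {D d : ℕ} (v u : Fin d → EuclideanSpace ℝ (Fin D))
    (θ : Fin d → ℝ) (t : ℝ) : Submodule ℝ (EuclideanSpace ℝ (Fin D)) :=
  Submodule.span ℝ (Set.range (aVec v u θ t))

/-- for orthonormal `{v₁,…,v_d,u₁,…,u_d}`, reals `θ` with `Σθ_j² = 1`, and any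
`x ∈ ℝ^D`, `(Σ_j θ_j (a_j(t)·x)(b_j(t)·x))² ≤ ‖x‖² dist(x,L(t))²`. -/
theorem stmt2 {D d : ℕ} (v u : Fin d → EuclideanSpace ℝ (Fin D)) (θ : Fin d → ℝ)
    (horth : Orthonormal ℝ (Sum.elim v u)) (hθ : ∑ j, θ j ^ 2 = 1)
    (x : EuclideanSpace ℝ (Fin D)) (t : ℝ) :
    (∑ j, θ j * (inner ℝ (aVec v u θ t j) x : ℝ) * (inner ℝ (bVec v u θ t j) x : ℝ)) ^ 2
      ≤ ‖x‖ ^ 2 * distL x (rotCurve v u θ t) ^ 2 := by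
  classical
  rw [orthonormal_iff_ite] at horth
  have hvv : ∀ i j : Fin d, (inner ℝ (v i) (v j) : ℝ) = if i = j then 1 else 0 := by
    intro i j; simpa using horth (Sum.inl i) (Sum.inl j)
  have huu : ∀ i j : Fin d, (inner ℝ (u i) (u j) : ℝ) = if i = j then 1 else 0 := by
    intro i j; simpa using horth (Sum.inr i) (Sum.inr j)
  have hvu : ∀ i j : Fin d, (inner ℝ (v i) (u j) : ℝ) = 0 := by
    intro i j; simpa using horth (Sum.inl i) (Sum.inr j)
  have huv : ∀ i j : Fin d, (inner ℝ (u i) (v j) : ℝ) = 0 := by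
    intro i j; simpa using horth (Sum.inr i) (Sum.inl j)
  have hab : ∀ i j : Fin d, (inner ℝ (aVec v u θ t i) (bVec v u θ t j) : ℝ) = 0 := by
    intro i j
    simp only [aVec, bVec, inner_add_left, inner_add_right, real_inner_smul_left,
      real_inner_smul_right, hvv, huu, hvu, huv]
    by_cases h : i = j <;> simp [h] <;> ring
  have haa : Orthonormal ℝ (aVec v u θ t) := by
    rw [orthonormal_iff_ite]
    intro i j
    simp only [aVec, inner_add_left, inner_add_right, real_inner_smul_left,
      real_inner_smul_right, hvv, huu, hvu, huv]
    by_cases h : i = j <;> simp [h]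
    rw [← Real.sin_sq_add_cos_sq (t * θ j)]; ring
  have hbb : Orthonormal ℝ (bVec v u θ t) := by
    rw [orthonormal_iff_ite]
    intro i j
    simp only [bVec, inner_add_left, inner_add_right, real_inner_smul_left,
      real_inner_smul_right, hvv, huu, hvu, huv]
    by_cases h : i = j <;> simp [h]
    rw [← Real.sin_sq_add_cos_sq (t * θ j)]; ring
  set L := rotCurve v u θ t with hL
  set c : Fin d → ℝ := fun j => θ j * (inner ℝ (aVec v u θ t j) x : ℝ) with hc
  set w : EuclideanSpace ℝ (Fin D) := ∑ j, c j • bVec v u θ t j with hwdef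
  have hb_mem : ∀ j, bVec v u θ t j ∈ Lᗮ := by
    intro j
    rw [Submodule.mem_orthogonal]
    intro y hy
    rw [hL, rotCurve] at hy
    induction hy using Submodule.span_induction with
    | mem y hy =>
      obtain ⟨i, rfl⟩ := hy
      exact hab i j
    | zero => simp
    | add y z _ _ hy hz => rw [inner_add_left, hy, hz]; ring
    | smul r y _ hy => rw [real_inner_smul_left, hy]; ring
  have hw_mem : w ∈ Lᗮ := Submodule.sum_mem _ fun j _ => Submodule.smul_mem _ _ (hb_mem j)
  have hwx : (inner ℝ w x : ℝ) = ∑ j, θ j * (inner ℝ (aVec v u θ t j) x : ℝ)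
      * (inner ℝ (bVec v u θ t j) x : ℝ) := by
    rw [hwdef, sum_inner]
    refine Finset.sum_congr rfl fun j _ => ?_
    rw [real_inner_smul_left, hc]
  set P : EuclideanSpace ℝ (Fin D) := (L.orthogonalProjection x : EuclideanSpace ℝ (Fin D)) with hP
  have hwP : (inner ℝ w P : ℝ) = 0 := by
    have := (Submodule.mem_orthogonal L w).mp hw_mem P (by exact (L.orthogonalProjection x).2)
    rwa [real_inner_comm] at this
  have hkey : (inner ℝ w x : ℝ) = inner ℝ w (x - P) := by
    rw [inner_sub_right, hwP, sub_zero]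
  have hnormw : ‖w‖ ^ 2 = ∑ j, c j ^ 2 := by
    have := hbb.inner_sum c c Finset.univ
    rw [← hwdef] at this
    rw [← real_inner_self_eq_norm_sq, this]
    refine Finset.sum_congr rfl fun j _ => ?_
    simp [sq]
  have hθle : ∀ j, θ j ^ 2 ≤ 1 := by
    intro j
    rw [← hθ]
    exact Finset.single_le_sum (fun i _ => sq_nonneg (θ i)) (Finset.mem_univ j)
  have hnormw_le : ‖w‖ ^ 2 ≤ ‖x‖ ^ 2 := by
    rw [hnormw]
    calc ∑ j, c j ^ 2 ≤ ∑ j, (inner ℝ (aVec v u θ t j) x : ℝ) ^ 2 := by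
          refine Finset.sum_le_sum fun j _ => ?_
          rw [hc, mul_pow]
          calc θ j ^ 2 * (inner ℝ (aVec v u θ t j) x : ℝ) ^ 2
              ≤ 1 * (inner ℝ (aVec v u θ t j) x : ℝ) ^ 2 :=
                mul_le_mul_of_nonneg_right (hθle j) (sq_nonneg _)
            _ = _ := one_mul _
      _ ≤ ‖x‖ ^ 2 := by
          have := haa.sum_inner_products_le (s := Finset.univ) x
          simpa [sq_abs] using this
  have hCS : (inner ℝ w (x - P) : ℝ) ^ 2 ≤ ‖w‖ ^ 2 * ‖x - P‖ ^ 2 := by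
    rw [← mul_pow, ← sq_abs (inner ℝ w (x - P) : ℝ)]
    exact pow_le_pow_left₀ (abs_nonneg _) (abs_real_inner_le_norm w (x - P)) 2
  calc (∑ j, θ j * (inner ℝ (aVec v u θ t j) x : ℝ) * (inner ℝ (bVec v u θ t j) x : ℝ)) ^ 2
      = (inner ℝ w (x - P) : ℝ) ^ 2 := by rw [← hkey, hwx]
    _ ≤ ‖w‖ ^ 2 * ‖x - P‖ ^ 2 := hCS
    _ ≤ ‖x‖ ^ 2 * ‖x - P‖ ^ 2 := mul_le_mul_of_nonneg_right hnormw_le (sq_nonneg _)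
    _ = ‖x‖ ^ 2 * distL x L ^ 2 := by rw [distL, hP]
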